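/- arXiv:1008.2074 — 4 statements merged into one kernel-verified Lean document; each statement's English description precedes it below -/
import Mathlib

section
/- Let I be an ideal in ℤ[x₁,…,xₙ] with I ∩ ℤ = ⟨0⟩. Then there exists a nonzero integer h such that the colon ideal (I : h) equals the contraction of the extension of I to ℚ[x₁,…,xₙ], i.e. (I : h) = (I·ℚ[x₁,…,xₙ]) ∩ ℤ[x₁,…,xₙ], and moreover I = (I : h) ∩ ⟨I, h⟩. -/
/-!
Write `J` for the contraction of `I ℚ[x]`; clearing denominators, `f ∈ J` iff `d • f ∈ I` for
some nonzero integer `d`. Every colon ideal `I : d` with `d ≠ 0` lies in `J`, and by Noetherianity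
one of them, `I : h`, is maximal; since `I : h ≤ I : h d'` for every `d'`, it absorbs all of `J`.
Then `I : h² = I : h`, and this stability alone gives `I = (I : h) ∩ (I + (h))`: if
`f = a + g h` with `a ∈ I` and `f h ∈ I`, then `g h² ∈ I`, so `g h ∈ I` and `f ∈ I`.
-/

open MvPolynomial

namespace Ideal

variable {R : Type*} [CommRing R]

theorem colon_span_singleton_le_colon_span_singleton_mul (I : Ideal R) (a b : R) :
    I.colon (span {a}) ≤ I.colon (span {a * b}) := fun x hx => by
  rw [mem_colon_span_singleton] at hx ⊢
  simpa only [mul_assoc] using I.mul_mem_right b hx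

theorem eq_colon_inf_sup_span_singleton {I : Ideal R} {s : R}
    (hs : I.colon (span {s * s}) ≤ I.colon (span {s})) :
    I = I.colon (span {s}) ⊓ (I ⊔ span {s}) := by
  refine le_antisymm (le_inf (fun x hx => mem_colon_span_singleton.mpr (I.mul_mem_right s hx))
    le_sup_left) fun f hf => ?_
  obtain ⟨hfs, hf⟩ := Submodule.mem_inf.mp hf
  obtain ⟨a, ha, _, hb, rfl⟩ := Submodule.mem_sup.mp hf
  obtain ⟨g, rfl⟩ := mem_span_singleton'.mp hb
  rw [mem_colon_span_singleton] at hfs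
  have hg : g * (s * s) ∈ I := by
    have : g * (s * s) = (a + g * s) * s - a * s := by ring
    exact this ▸ I.sub_mem hfs (I.mul_mem_right s ha)
  exact I.add_mem ha (mem_colon_span_singleton.mp (hs (mem_colon_span_singleton.mpr hg)))

end Ideal

namespace IsLocalization

variable {R : Type*} [CommRing R] (M : Submonoid R) (S : Type*) [CommRing S] [Algebra R S]
  [IsLocalization M S]

theorem colon_span_singleton_le_comap_map {m : R} (hm : m ∈ M) (I : Ideal R) :
    I.colon (Ideal.span {m}) ≤ (I.map (algebraMap R S)).comap (algebraMap R S) := fun x hx =>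
  (algebraMap_mem_map_algebraMap_iff M S I x).mpr
    ⟨m, hm, mul_comm m x ▸ Ideal.mem_colon_span_singleton.mp hx⟩

theorem exists_colon_span_singleton_eq_comap_map [IsNoetherianRing R] (I : Ideal R) :
    ∃ m ∈ M, I.colon (Ideal.span {m}) = (I.map (algebraMap R S)).comap (algebraMap R S) := by
  obtain ⟨_, ⟨m, hm, rfl⟩, hmax⟩ := set_has_maximal_iff_noetherian.mpr inferInstance
    ((fun m => I.colon (Ideal.span {m})) '' (M : Set R)) ⟨_, 1, M.one_mem, rfl⟩
  refine ⟨m, hm, le_antisymm (colon_span_singleton_le_comap_map M S hm I) fun x hx => ?_⟩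
  obtain ⟨m', hm', hx⟩ := (algebraMap_mem_map_algebraMap_iff M S I x).mp hx
  have hstable : I.colon (Ideal.span {m}) = I.colon (Ideal.span {m * m'}) :=
    eq_of_le_of_not_lt (I.colon_span_singleton_le_colon_span_singleton_mul m m')
      (hmax _ ⟨m * m', M.mul_mem hm hm', rfl⟩)
  rw [hstable, Ideal.mem_colon_span_singleton]
  exact (by ring : x * (m * m') = m' * x * m) ▸ I.mul_mem_right m hx

end IsLocalization

attribute [local instance] algebraMvPolynomial

theorem stmt_0_general (n : ℕ) (I : Ideal (MvPolynomial (Fin n) ℤ)) :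
    ∃ h : ℤ, h ≠ 0 ∧
      I.colon (Ideal.span {(C h : MvPolynomial (Fin n) ℤ)}) =
        Ideal.comap (MvPolynomial.map (Int.castRingHom ℚ))
          (Ideal.map (MvPolynomial.map (Int.castRingHom ℚ)) I) ∧
      I = I.colon (Ideal.span {(C h : MvPolynomial (Fin n) ℤ)}) ⊓
            (I ⊔ Ideal.span {(C h : MvPolynomial (Fin n) ℤ)}) := by
  let M := (nonZeroDivisors ℤ).map (C : ℤ →+* MvPolynomial (Fin n) ℤ)
  have halg : algebraMap (MvPolynomial (Fin n) ℤ) (MvPolynomial (Fin n) ℚ) =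
      MvPolynomial.map (Int.castRingHom ℚ) := by
    rw [algebraMap_def, algebraMap_int_eq]
  obtain ⟨_, ⟨h, hh, rfl⟩, hcolon⟩ :=
    IsLocalization.exists_colon_span_singleton_eq_comap_map M (MvPolynomial (Fin n) ℚ) I
  rw [halg] at hcolon
  refine ⟨h, nonZeroDivisors.ne_zero hh, hcolon, Ideal.eq_colon_inf_sup_span_singleton ?_⟩
  have hhh : C h * C h ∈ M := M.mul_mem ⟨h, hh, rfl⟩ ⟨h, hh, rfl⟩
  simpa only [hcolon, halg] using
    IsLocalization.colon_span_singleton_le_comap_map M (MvPolynomial (Fin n) ℚ) hhh I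

theorem stmt_0 (n : ℕ) (I : Ideal (MvPolynomial (Fin n) ℤ))
    (hI : ∀ a : ℤ, (C a : MvPolynomial (Fin n) ℤ) ∈ I → a = 0) :
    ∃ h : ℤ, h ≠ 0 ∧
      I.colon (Ideal.span {(C h : MvPolynomial (Fin n) ℤ)}) =
        Ideal.comap (MvPolynomial.map (Int.castRingHom ℚ))
          (Ideal.map (MvPolynomial.map (Int.castRingHom ℚ)) I) ∧
      I = I.colon (Ideal.span {(C h : MvPolynomial (Fin n) ℤ)}) ⊓
            (I ⊔ Ideal.span {(C h : MvPolynomial (Fin n) ℤ)}) :=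
  stmt_0_general n I
end

section
/- Let I be an ideal in ℤ[x₁,…,xₙ] with I ∩ ℤ = ⟨p^ν⟩ for some prime p and ν ≥ 1. Then the map P̄ ↦ preimage of P̄ under the reduction-mod-p map ℤ[x₁,…,xₙ] → 𝔽_p[x₁,…,xₙ] gives a bijection between the minimal primes of I·𝔽_p[x₁,…,xₙ] and the minimal primes of I. -/
/-!
Reduction mod `p` is surjective with kernel generated by `p`, and `p` lies in the radical of `I`
because `p ^ ν ∈ I`. Hence `I` and `I + (p)`, the full preimage of `I 𝔽_p[x]`, have the same radical
and so the same minimal primes; and pulling back along a surjection matches the minimal primes of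
an ideal of the target bijectively with those of its preimage.
-/

open MvPolynomial

namespace Ideal

variable {R S : Type*} [CommRing R] [CommRing S]

theorem minimalPrimes_sup_of_le_radical {I K : Ideal R} (hK : K ≤ I.radical) :
    (I ⊔ K).minimalPrimes = I.minimalPrimes := by
  have hrad : (I ⊔ K).radical = I.radical :=
    le_antisymm
      (radical_idem I ▸ radical_mono (sup_le le_radical hK))
      (radical_mono le_sup_left)
  rw [← radical_minimalPrimes, hrad, radical_minimalPrimes]

theorem bijOn_comap_minimalPrimes_map {f : R →+* S} (hf : Function.Surjective f) {I : Ideal R}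
    (hker : RingHom.ker f ≤ I.radical) :
    Set.BijOn (comap f) (I.map f).minimalPrimes I.minimalPrimes := by
  have himage : comap f '' (I.map f).minimalPrimes = I.minimalPrimes := by
    rw [← comap_minimalPrimes_eq_of_surjective hf, comap_map_of_surjective' f hf,
      minimalPrimes_sup_of_le_radical hker]
  exact himage ▸ (comap_injective_of_surjective f hf).injOn.bijOn_image

end Ideal

theorem MvPolynomial.ker_map_intCast_le_radical {σ : Type*} {p ν : ℕ}
    {I : Ideal (MvPolynomial σ ℤ)} (hI : C ((p : ℤ) ^ ν) ∈ I) :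
    RingHom.ker (map (Int.castRingHom (ZMod p)) : MvPolynomial σ ℤ →+* _) ≤ I.radical := by
  rw [ker_map, ZMod.ker_intCastRingHom, Ideal.map_span, Set.image_singleton, Ideal.span_le,
    Set.singleton_subset_iff]
  exact ⟨ν, by rwa [← map_pow]⟩

theorem stmt_4_general (n : ℕ) (p : ℕ) (ν : ℕ)
    (I : Ideal (MvPolynomial (Fin n) ℤ))
    (hI : ∀ a : ℤ, (C a : MvPolynomial (Fin n) ℤ) ∈ I ↔ ((p : ℤ) ^ ν) ∣ a) :
    Set.BijOn (Ideal.comap (MvPolynomial.map (Int.castRingHom (ZMod p))))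
      (Ideal.map (MvPolynomial.map (Int.castRingHom (ZMod p))) I).minimalPrimes
      I.minimalPrimes :=
  Ideal.bijOn_comap_minimalPrimes_map (map_surjective _ ZMod.intCast_surjective)
    (ker_map_intCast_le_radical ((hI _).2 dvd_rfl))

theorem stmt_4 (n : ℕ) (p : ℕ) (hp : p.Prime) (ν : ℕ) (hν : 1 ≤ ν)
    (I : Ideal (MvPolynomial (Fin n) ℤ))
    (hI : ∀ a : ℤ, (C a : MvPolynomial (Fin n) ℤ) ∈ I ↔ ((p : ℤ) ^ ν) ∣ a) :
    Set.BijOn (Ideal.comap (MvPolynomial.map (Int.castRingHom (ZMod p))))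
      (Ideal.map (MvPolynomial.map (Int.castRingHom (ZMod p))) I).minimalPrimes
      I.minimalPrimes :=
  stmt_4_general n p ν I hI
end

section
/- Let I be an ideal in ℤ[x₁,…,xₙ] and J the intersection of all primary components of I associated to the minimal primes of I (in some fixed primary decomposition). Then there exists a natural number m such that I = J ∩ (I + (I : J)^m). -/
/-!
Let `I = Q₁ ∩ ⋯ ∩ Q_s` be a primary decomposition and `J ⊇ I`. For each `Qᵢ`, either `J ⊆ Qᵢ`,
or some `j ∈ J \ Qᵢ` satisfies `j · (I : J) ⊆ I ⊆ Qᵢ`, and primality puts `(I : J)` inside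
`√Qᵢ`; since ideals are finitely generated, a power of `(I : J)` then lies in `Qᵢ`.
In both cases `J ∩ (I + (I : J)^m) ⊆ Qᵢ` for all large `m`, and intersecting over `i` gives `I`.
-/

namespace Ideal

variable {R : Type*} [CommSemiring R]

theorem IsPrimary.le_or_colon_le_radical {I J Q : Ideal R} (hQ : Q.IsPrimary) (hIQ : I ≤ Q) :
    J ≤ Q ∨ I.colon J ≤ Q.radical := by
  refine or_iff_not_imp_left.mpr fun hJQ b hb => ?_
  obtain ⟨j, hjJ, hjQ⟩ := SetLike.not_le_iff_exists.mp hJQ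
  have hjb : j * b ∈ Q := mul_comm b j ▸ hIQ (Submodule.mem_colon.mp hb j hjJ)
  exact ((isPrimary_iff.mp hQ).2 hjb).resolve_left hjQ

theorem IsPrimary.exists_inf_sup_colon_pow_le [IsNoetherianRing R] {I J Q : Ideal R}
    (hQ : Q.IsPrimary) (hIQ : I ≤ Q) : ∃ n, ∀ m ≥ n, J ⊓ (I + I.colon J ^ m) ≤ Q := by
  rcases hQ.le_or_colon_le_radical (J := J) hIQ with hJQ | hcolon
  · exact ⟨0, fun m _ => inf_le_left.trans hJQ⟩
  · obtain ⟨n, hn⟩ := exists_pow_le_of_le_radical_of_fg hcolon (IsNoetherian.noetherian _)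
    exact ⟨n, fun m hm => inf_le_right.trans (sup_le hIQ ((pow_le_pow_right hm).trans hn))⟩

theorem exists_eq_inf_sup_colon_pow_of_eq_iInf_isPrimary [IsNoetherianRing R] {ι : Type*}
    [Finite ι] {Q : ι → Ideal R} (hQ : ∀ i, (Q i).IsPrimary) {I J : Ideal R}
    (hI : I = ⨅ i, Q i) (hIJ : I ≤ J) : ∃ m, I = J ⊓ (I + I.colon J ^ m) := by
  have hIQ : ∀ i, I ≤ Q i := fun i => hI ▸ iInf_le Q i
  choose n hn using fun i => (hQ i).exists_inf_sup_colon_pow_le (J := J) (hIQ i)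
  obtain ⟨m, hm⟩ := Finite.bddAbove_range n
  refine ⟨m, le_antisymm (le_inf hIJ le_sup_left) ?_⟩
  exact (le_iInf fun i => hn i m (hm ⟨i, rfl⟩)).trans_eq hI.symm

end Ideal

theorem stmt_6 (n : ℕ) (I : Ideal (MvPolynomial (Fin n) ℤ))
    (s : ℕ) (Q : Fin s → Ideal (MvPolynomial (Fin n) ℤ))
    (hprim : ∀ i, (Q i).IsPrimary)
    (hdec : I = ⨅ i, Q i)
    (J : Ideal (MvPolynomial (Fin n) ℤ))
    (hJ : J = ⨅ i ∈ {i | (Q i).radical ∈ I.minimalPrimes}, Q i) :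
    ∃ m : ℕ, I = J ⊓ (I + (I.colon J) ^ m) := by
  have hIJ : I ≤ J := hJ ▸ le_iInf₂ fun i _ => hdec ▸ iInf_le Q i
  exact Ideal.exists_eq_inf_sup_colon_pow_of_eq_iInf_isPrimary hprim hdec hIJ
end

section
/- Let I = Q ∩ J be an ideal in ℤ[x₁,…,xₙ] with √I = P prime, Q a P-primary ideal, P ∩ ℤ = ⟨p⟩ for a prime p, and √J strictly containing P. Let u ⊆ {x₁,…,xₙ} be a maximal independent set of variables for P·𝔽_p[x₁,…,xₙ], and let R = ℤ[u]_{⟨p⟩}. Then I·R[x∖u] ∩ ℤ[x₁,…,xₙ] = Q. -/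
open MvPolynomial

noncomputable section

/-- The polynomial ring `ℤ[u]` in the variables belonging to `u`. -/
abbrev ZU (n : ℕ) (u : Finset (Fin n)) : Type := MvPolynomial {i : Fin n // i ∈ u} ℤ

/-- The ideal `⟨p⟩` of `ℤ[u]`. -/
abbrev pIdeal (n : ℕ) (p : ℕ) (u : Finset (Fin n)) : Ideal (ZU n u) :=
  Ideal.span {(C (p : ℤ) : ZU n u)}

/-- The localization `R = ℤ[u]_{⟨p⟩}`. -/
abbrev LocZU (n p : ℕ) (u : Finset (Fin n)) [hpr : (pIdeal n p u).IsPrime] : Type :=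
  Localization (pIdeal n p u).primeCompl

/-- The canonical map `ℤ[x₁,…,xₙ] → R[x∖u]` where `R = ℤ[u]_{⟨p⟩}`,
sending a variable in `u` to the corresponding constant of `R` and a variable
outside `u` to itself. -/
def extMap (n p : ℕ) (u : Finset (Fin n)) [hpr : (pIdeal n p u).IsPrime] :
    MvPolynomial (Fin n) ℤ →+* MvPolynomial {i : Fin n // i ∉ u} (LocZU n p u) :=
  (aeval fun i : Fin n =>
    if h : i ∈ u then
      MvPolynomial.C (algebraMap (ZU n u) (LocZU n p u) (X ⟨i, h⟩))
    else X (⟨i, h⟩ : {i : Fin n // i ∉ u})).toRingHom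

/-!
Localizing `ℤ[u]` at `⟨p⟩` inverts exactly the polynomials `t ∈ ℤ[u]` not divisible by `p`, so
`f` lies in the contraction of `I · R[x∖u]` iff `t f ∈ I` for one such `t`. Reducing mod `p`, such a
`t` becomes a nonzero polynomial in the variables `u`, which are independent modulo `P`, so
`t ∉ P = √Q`; as `Q` is `P`-primary, `t f ∈ Q` gives `f ∈ Q`.

Conversely some such `t` lies in `√J`, so that a power `tᵐ` lies in `J` and `tᵐ f ∈ Q ∩ J = I` for
every `f ∈ Q`. Otherwise a prime of `𝔽_p[x]` containing the image of `√J` (which strictly contains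
`P̄`) avoids `𝔽_p[u] ∖ 0`, and `𝔽_p[x]/P̄` would have dimension greater than `#u`: in a finitely
generated domain `A` over a field, an algebraically independent family has at most `dim A` members.
For the latter, if `a` is transcendental over `B = F[x₁, …, xₖ]`, the localization of `A` at
`B ∖ 0` is not a field by Zariski's lemma; a nonzero prime of it contracts to a prime `q ≠ 0` of
`A` with `q ∩ B = 0`, modulo which the `xᵢ` remain independent.
-/

open scoped nonZeroDivisors TensorProduct

section Transcendental

variable {B A : Type*} [CommRing B] [CommRing A] [IsDomain A] [Algebra B A] {a : A}

theorem injective_algebraMap_localization_of_transcendental (ha : Transcendental B a) :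
    Function.Injective (algebraMap A (Localization (Algebra.algebraMapSubmonoid A B⁰))) := by
  have hBA : Function.Injective (algebraMap B A) := by
    by_contra h
    exact ha ((Algebra.isAlgebraic_of_not_injective h).isAlgebraic a)
  exact IsLocalization.injective (M := Algebra.algebraMapSubmonoid A B⁰) _
    (map_le_nonZeroDivisors_of_injective _ hBA le_rfl)

variable [IsDomain B] [Algebra.FiniteType B A]

theorem not_isField_localization_of_transcendental (ha : Transcendental B a) :
    ¬ IsField (Localization (Algebra.algebraMapSubmonoid A B⁰)) := by
  let M := Algebra.algebraMapSubmonoid A B⁰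
  intro hL
  let := hL.toField
  have hAL := injective_algebraMap_localization_of_transcendental ha
  have hunit (b : B⁰) : IsUnit (algebraMap B (Localization M) b) := by
    rw [IsScalarTower.algebraMap_apply B A (Localization M)]
    exact IsLocalization.map_units (Localization M) (⟨_, b.1, b.2, rfl⟩ : M)
  let K := FractionRing B
  let : Algebra K (Localization M) := (IsLocalization.lift hunit).toAlgebra
  have : IsScalarTower B K (Localization M) :=
    IsScalarTower.of_algebraMap_eq fun b => (IsLocalization.lift_eq hunit b).symm
  let φ : K ⊗[B] A →ₐ[K] Localization M := Algebra.TensorProduct.lift (Algebra.ofId _ _)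
    (IsScalarTower.toAlgHom B A _) fun _ _ => Commute.all _ _
  have hφ : Function.Surjective φ := by
    intro z
    obtain ⟨⟨a', t⟩, rfl⟩ := IsLocalization.mk'_surjective M z
    obtain ⟨b, hb, hbt⟩ := t.2
    refine ⟨IsLocalization.mk' K 1 ⟨b, hb⟩ ⊗ₜ[B] a', ?_⟩
    rw [IsLocalization.eq_mk'_iff_mul_eq]
    simp only [φ, IsFractionRing.mk'_eq_div, map_one, one_div, Algebra.TensorProduct.lift_tmul,
      map_inv₀, AlgHom.map_algebraMap, IsScalarTower.coe_toAlgHom']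
    rw [← hbt, ← IsScalarTower.algebraMap_apply, mul_right_comm,
      inv_mul_cancel₀ (hunit ⟨b, hb⟩).ne_zero, one_mul]
  have : Algebra.FiniteType K (Localization M) := Algebra.FiniteType.of_surjective φ hφ
  have := finite_of_finite_type_of_isJacobsonRing K (Localization M)
  have hK : IsAlgebraic K (algebraMap A (Localization M) a) :=
    (Algebra.IsIntegral.isIntegral _).isAlgebraic
  have := IsLocalization.isAlgebraic K B⁰
  exact (transcendental_algebraMap_iff hAL).mpr ha (hK.restrictScalars B)

theorem exists_isPrime_ne_bot_comap_eq_bot_of_transcendental (ha : Transcendental B a) :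
    ∃ q : Ideal A, q.IsPrime ∧ q ≠ ⊥ ∧ q.comap (algebraMap B A) = ⊥ := by
  let M := Algebra.algebraMapSubmonoid A B⁰
  have : Nontrivial (Localization M) :=
    (injective_algebraMap_localization_of_transcendental ha).nontrivial
  obtain ⟨m, hm, hmp⟩ :=
    Ring.not_isField_iff_exists_prime.mp (not_isField_localization_of_transcendental ha)
  refine ⟨m.comap (algebraMap A _), hmp.comap _, fun h => hm ?_, ?_⟩
  · rw [← IsLocalization.map_under M (Localization M) m, Ideal.under, h, Ideal.map_bot]
  · refine eq_bot_iff.mpr fun b hb => ?_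
    by_contra hb0
    have hunit : IsUnit (algebraMap A (Localization M) (algebraMap B A b)) :=
      IsLocalization.map_units (Localization M)
        (⟨_, b, mem_nonZeroDivisors_of_ne_zero hb0, rfl⟩ : M)
    exact hmp.ne_top (Ideal.eq_top_of_isUnit_mem _ hb hunit)

end Transcendental

theorem AlgebraicIndependent.quotient_mk {F A ι : Type*} [CommRing F] [CommRing A] [Algebra F A]
    {x : ι → A} (hx : AlgebraicIndependent F x) {q : Ideal A}
    (hq : q.comap (algebraMap (Algebra.adjoin F (Set.range x)) A) = ⊥) :
    AlgebraicIndependent F (Ideal.Quotient.mkₐ F q ∘ x) := by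
  rw [algebraicIndependent_iff] at hx ⊢
  intro c hc
  have hcq : aeval x c ∈ q := by
    rw [← Ideal.Quotient.eq_zero_iff_mem, ← Ideal.Quotient.mkₐ_eq_mk F, ← hc,
      ← AlgHom.comp_apply, comp_aeval]
    rfl
  have hcB : aeval x c ∈ Algebra.adjoin F (Set.range x) := by
    rw [Algebra.adjoin_range_eq_range_aeval]
    exact ⟨c, rfl⟩
  have : (⟨_, hcB⟩ : Algebra.adjoin F (Set.range x)) ∈ q.comap (algebraMap _ A) := hcq
  rw [hq, Ideal.mem_bot] at this
  exact hx c (congrArg Subtype.val this)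

theorem ringKrullDim_succ_le_of_surjective_of_ker_ne_bot {R S : Type*} [CommRing R] [IsDomain R]
    [CommRing S] (f : R →+* S) (hf : Function.Surjective f) (hker : RingHom.ker f ≠ ⊥) :
    ringKrullDim S + 1 ≤ ringKrullDim R := by
  obtain ⟨r, hr, hr0⟩ := Submodule.exists_mem_ne_zero_of_ne_bot hker
  exact ringKrullDim_succ_le_of_surjective f hf (mem_nonZeroDivisors_of_ne_zero hr0) hr

theorem AlgebraicIndependent.natCard_le_ringKrullDim {F A ι : Type*} [Field F] [CommRing A]
    [IsDomain A] [Algebra F A] [Algebra.FiniteType F A] [Finite ι] {x : ι → A}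
    (hx : AlgebraicIndependent F x) : (Nat.card ι : WithBot ℕ∞) ≤ ringKrullDim A := by
  induction ι using Finite.induction_empty_option generalizing A with
  | of_equiv e ih =>
    rw [← Nat.card_congr e]
    exact ih (hx.comp e e.injective)
  | h_empty => simpa using ringKrullDim_nonneg_of_nontrivial
  | @h_option ι _ ih =>
    have hx' : AlgebraicIndependent F fun o : Option ι => o.elim (x none) (x ∘ some) := by
      convert hx with o
      cases o <;> rfl
    obtain ⟨hxs, hxn⟩ := AlgebraicIndependent.option_iff.mp hx'
    have := Algebra.FiniteType.of_restrictScalars_finiteType F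
      (Algebra.adjoin F (Set.range (x ∘ some))) A
    obtain ⟨q, hq, hq0, hqB⟩ := exists_isPrime_ne_bot_comap_eq_bot_of_transcendental hxn
    calc (Nat.card (Option ι) : WithBot ℕ∞) = Nat.card ι + 1 := by simp
      _ ≤ ringKrullDim (A ⧸ q) + 1 := by
        gcongr
        exact ih (hxs.quotient_mk hqB)
      _ ≤ ringKrullDim A := ringKrullDim_succ_le_of_surjective_of_ker_ne_bot _
        Ideal.Quotient.mk_surjective (by rwa [Ideal.mk_ker])

namespace MvPolynomial

theorem map_mem_map_map_iff_of_isLocalization {R S σ : Type*} [CommRing R]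
    [CommRing S] [Algebra R S] (M : Submonoid R) [IsLocalization M S]
    (I : Ideal (MvPolynomial σ R)) (z : MvPolynomial σ R) :
    map (algebraMap R S) z ∈ I.map (map (algebraMap R S)) ↔ ∃ t ∈ M, C t * z ∈ I := by
  let := algebraMvPolynomial (σ := σ) (R := R) (S := S)
  rw [← algebraMap_def, IsLocalization.algebraMap_mem_map_algebraMap_iff (M.map C)]
  simp

theorem algebraicIndependent_quotient_mk_X_iff {R σ ι : Type*} [CommRing R]
    (q : Ideal (MvPolynomial σ R)) (v : ι → σ) :
    AlgebraicIndependent R (fun i => Ideal.Quotient.mk q (X (v i))) ↔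
      ∀ c : MvPolynomial ι R, rename v c ∈ q → c = 0 := by
  have (c : MvPolynomial ι R) :
      aeval (fun i => Ideal.Quotient.mk q (X (v i))) c = Ideal.Quotient.mk q (rename v c) := by
    rw [← Ideal.Quotient.mkₐ_eq_mk R, ← AlgHom.comp_apply]
    exact DFunLike.congr_fun (algHom_ext fun i => by simp) c
  simp_rw [algebraicIndependent_iff, this, Ideal.Quotient.eq_zero_iff_mem]

theorem exists_rename_mem_of_ringKrullDim_quotient_eq {F σ : Type*} [Field F] [Finite σ]
    {P J : Ideal (MvPolynomial σ F)} [P.IsPrime] (hPJ : P < J) (u : Finset σ)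
    (hdim : ringKrullDim (MvPolynomial σ F ⧸ P) ≤ u.card) :
    ∃ c : MvPolynomial {i // i ∈ u} F, c ≠ 0 ∧ rename Subtype.val c ∈ J := by
  by_contra! hJ
  let S := (nonZeroDivisors (MvPolynomial {i // i ∈ u} F)).map (rename (R := F) Subtype.val)
  have hJS : Disjoint (J : Set (MvPolynomial σ F)) S := by
    rw [Set.disjoint_right]
    rintro _ ⟨c, hc, rfl⟩
    exact hJ c (nonZeroDivisors.ne_zero hc)
  obtain ⟨Q, hQ, hJQ, hQS⟩ := Ideal.exists_le_prime_disjoint J S hJS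
  have hind : AlgebraicIndependent F fun i : {i // i ∈ u} => Ideal.Quotient.mk Q (X i.1) := by
    refine (algebraicIndependent_quotient_mk_X_iff Q Subtype.val).mpr fun c hc => ?_
    by_contra hc0
    exact Set.disjoint_left.mp hQS hc ⟨c, mem_nonZeroDivisors_of_ne_zero hc0, rfl⟩
  obtain ⟨g, hgQ, hgP⟩ := SetLike.exists_of_lt (hPJ.trans_le hJQ)
  have hker : RingHom.ker (Ideal.Quotient.factor (hPJ.le.trans hJQ)) ≠ ⊥ := by
    refine (Submodule.ne_bot_iff _).mpr ⟨Ideal.Quotient.mk P g, ?_, ?_⟩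
    · simpa [RingHom.mem_ker, Ideal.Quotient.eq_zero_iff_mem] using hgQ
    · simpa [Ideal.Quotient.eq_zero_iff_mem] using hgP
  have : ((u.card + 1 : ℕ) : WithBot ℕ∞) ≤ u.card := calc
    ((u.card + 1 : ℕ) : WithBot ℕ∞) = Nat.card {i // i ∈ u} + 1 := by simp
    _ ≤ ringKrullDim (MvPolynomial σ F ⧸ Q) + 1 := by
      gcongr
      exact hind.natCard_le_ringKrullDim
    _ ≤ ringKrullDim (MvPolynomial σ F ⧸ P) :=
      ringKrullDim_succ_le_of_surjective_of_ker_ne_bot _ (Ideal.Quotient.factor_surjective _) hker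
    _ ≤ u.card := hdim
  exact Nat.not_succ_le_self _ (by exact_mod_cast this)

variable {σ : Type*} {p : ℕ}

theorem rename_notMem_of_not_C_dvd {P : Ideal (MvPolynomial σ ℤ)} {u : Finset σ}
    (hind : ∀ g : MvPolynomial {i // i ∈ u} (ZMod p),
      rename Subtype.val g ∈ P.map (map (Int.castRingHom (ZMod p))) → g = 0)
    {t : MvPolynomial {i // i ∈ u} ℤ} (ht : ¬ C (p : ℤ) ∣ t) :
    rename Subtype.val t ∉ P := by
  intro h
  refine ht ((C_dvd_iff_zmod p t).mpr (hind _ ?_))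
  rw [← map_rename]
  exact Ideal.mem_map_of_mem _ h

theorem exists_not_C_dvd_rename_mem [Finite σ] (hp : p.Prime) {P J : Ideal (MvPolynomial σ ℤ)}
    [P.IsPrime] (hpP : C (p : ℤ) ∈ P) (hPJ : P < J) (u : Finset σ)
    (hdim : ringKrullDim (MvPolynomial σ (ZMod p) ⧸ P.map (map (Int.castRingHom (ZMod p))))
      ≤ u.card) :
    ∃ t : MvPolynomial {i // i ∈ u} ℤ, ¬ C (p : ℤ) ∣ t ∧ rename Subtype.val t ∈ J := by
  have := Fact.mk hp
  let π : MvPolynomial σ ℤ →+* MvPolynomial σ (ZMod p) := map (Int.castRingHom (ZMod p))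
  have hπ : Function.Surjective π := map_surjective _ ZMod.intCast_surjective
  have hker : RingHom.ker π ≤ P := fun f hf => by
    obtain ⟨g, rfl⟩ := (C_dvd_iff_zmod p f).mpr hf
    exact P.mul_mem_right g hpP
  have hcomap {K : Ideal (MvPolynomial σ ℤ)} (hK : P ≤ K) : (K.map π).comap π = K := by
    rw [Ideal.comap_map_of_surjective' π hπ, sup_eq_left]
    exact hker.trans hK
  have : (P.map π).IsPrime := Ideal.map_isPrime_of_surjective hπ hker
  have hlt : P.map π < J.map π := lt_of_le_of_ne (Ideal.map_mono hPJ.le) fun h =>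
    hPJ.ne (by rw [← hcomap le_rfl, h, hcomap hPJ.le])
  obtain ⟨c, hc0, hcJ⟩ := exists_rename_mem_of_ringKrullDim_quotient_eq hlt u hdim
  obtain ⟨t, rfl⟩ := map_surjective (Int.castRingHom (ZMod p)) ZMod.intCast_surjective c
  refine ⟨t, fun h => hc0 ((C_dvd_iff_zmod p t).mp h), ?_⟩
  rw [← hcomap hPJ.le, Ideal.mem_comap]
  rwa [← map_rename] at hcJ

end MvPolynomial

def splitVars (n : ℕ) (u : Finset (Fin n)) :
    MvPolynomial (Fin n) ℤ ≃ₐ[ℤ] MvPolynomial {i : Fin n // i ∉ u} (ZU n u) :=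
  (renameEquiv ℤ ((Equiv.sumCompl (· ∈ u)).symm.trans (Equiv.sumComm _ _))).trans
    (sumAlgEquiv ℤ _ _)

theorem splitVars_rename (n : ℕ) (u : Finset (Fin n)) (t : ZU n u) :
    splitVars n u (rename Subtype.val t) = C t := by
  have : (splitVars n u).toAlgHom.comp (rename Subtype.val) =
      IsScalarTower.toAlgHom ℤ (ZU n u) (MvPolynomial {i : Fin n // i ∉ u} (ZU n u)) := by
    ext j
    simp [splitVars, Equiv.sumCompl, sumAlgEquiv_X_inr]
  exact DFunLike.congr_fun this t

section ExtMap

variable (n p : ℕ) (u : Finset (Fin n)) [(pIdeal n p u).IsPrime]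

theorem extMap_eq :
    extMap n p u = (map (algebraMap (ZU n u) (LocZU n p u))).comp (splitVars n u).toRingHom := by
  refine ringHom_ext (fun r => by simp [extMap]) fun i => ?_
  by_cases h : i ∈ u <;> simp [extMap, splitVars, Equiv.sumCompl, h]

theorem mem_comap_map_extMap_iff (I : Ideal (MvPolynomial (Fin n) ℤ)) (f : MvPolynomial (Fin n) ℤ) :
    f ∈ (I.map (extMap n p u)).comap (extMap n p u) ↔
      ∃ t ∈ (pIdeal n p u).primeCompl, rename Subtype.val t * f ∈ I := by
  rw [Ideal.mem_comap, extMap_eq, ← Ideal.map_map, RingHom.comp_apply,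
    map_mem_map_map_iff_of_isLocalization (pIdeal n p u).primeCompl]
  have key (t : ZU n u) : C t * (splitVars n u).toRingEquiv f =
      (splitVars n u).toRingEquiv (rename Subtype.val t * f) := by
    simp [splitVars_rename]
  simp_rw [RingEquiv.toRingHom_eq_coe, RingHom.coe_coe, key]
  exact exists_congr fun t => and_congr_right fun _ => Ideal.apply_mem_of_equiv_iff

end ExtMap

theorem stmt_11_general (n p : ℕ) (hp : p.Prime)
    (I Q J P : Ideal (MvPolynomial (Fin n) ℤ))
    (hI : I = Q ⊓ J) (hPprime : P.IsPrime)
    (hQ : Q.IsPrimary) (hQrad : Q.radical = P)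
    (hPZ : ∀ a : ℤ, (C a : MvPolynomial (Fin n) ℤ) ∈ P ↔ (p : ℤ) ∣ a)
    (hJ : P < J.radical)
    (u : Finset (Fin n))
    (hind : ∀ g : MvPolynomial {i : Fin n // i ∈ u} (ZMod p),
      rename Subtype.val g ∈ P.map (MvPolynomial.map (Int.castRingHom (ZMod p))) → g = 0)
    (hmax : ringKrullDim
        (MvPolynomial (Fin n) (ZMod p) ⧸
          P.map (MvPolynomial.map (Int.castRingHom (ZMod p))))
      = (u.card : WithBot (WithTop ℕ)))
    [hpr : (pIdeal n p u).IsPrime] :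
    Ideal.comap (extMap n p u) (Ideal.map (extMap n p u) I) = Q := by
  obtain ⟨t, ht, htJ⟩ := exists_not_C_dvd_rename_mem hp ((hPZ p).mpr dvd_rfl) hJ u hmax.le
  obtain ⟨m, htmJ⟩ := Ideal.mem_radical_iff.mp htJ
  have htm : t ^ m ∈ (pIdeal n p u).primeCompl := fun h =>
    ht (Ideal.mem_span_singleton.mp (hpr.mem_of_pow_mem m h))
  ext f
  rw [mem_comap_map_extMap_iff, hI]
  constructor
  · rintro ⟨s, hs, hsf⟩
    have hsP : rename Subtype.val s ∉ Q.radical := hQrad ▸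
      rename_notMem_of_not_C_dvd hind fun h => hs (Ideal.mem_span_singleton.mpr h)
    rw [mul_comm] at hsf
    exact ((Ideal.isPrimary_iff.mp hQ).2 hsf.1).resolve_right hsP
  · intro hf
    exact ⟨t ^ m, htm, Q.mul_mem_left _ hf, by rw [map_pow]; exact J.mul_mem_right _ htmJ⟩

theorem stmt_11 (n p : ℕ) (hp : p.Prime)
    (I Q J P : Ideal (MvPolynomial (Fin n) ℤ))
    (hI : I = Q ⊓ J) (hPprime : P.IsPrime) (hrad : I.radical = P)
    (hQ : Q.IsPrimary) (hQrad : Q.radical = P)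
    (hPZ : ∀ a : ℤ, (C a : MvPolynomial (Fin n) ℤ) ∈ P ↔ (p : ℤ) ∣ a)
    (hJ : P < J.radical)
    (u : Finset (Fin n))
    (hind : ∀ g : MvPolynomial {i : Fin n // i ∈ u} (ZMod p),
      rename Subtype.val g ∈ P.map (MvPolynomial.map (Int.castRingHom (ZMod p))) → g = 0)
    (hmax : ringKrullDim
        (MvPolynomial (Fin n) (ZMod p) ⧸
          P.map (MvPolynomial.map (Int.castRingHom (ZMod p))))
      = (u.card : WithBot (WithTop ℕ)))
    [hpr : (pIdeal n p u).IsPrime] :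
    Ideal.comap (extMap n p u) (Ideal.map (extMap n p u) I) = Q :=
  stmt_11_general n p hp I Q J P hI hPprime hQ hQrad hPZ hJ u hind hmax (hpr := hpr)

end
end
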